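/- arXiv:1003.3730 — 3 statements merged into one kernel-verified Lean document; each statement's English description precedes it below -/
import Mathlib

section
/- Vanishing conditions for generalized elliptic 6j-symbols: For nonnegative integers M, N, generic λ ∈ ℂ, w ∈ (ℂ^×)^M, z ∈ (ℂ^×)^N, and subsets S,T ⊆ [M], U,V ⊆ [N] with |S|+|U| = |T|+|V|, if any one of the four conditions |V| < |S∖T|, |U| < |T∖S|, |S^c| < |U∖V|, |T^c| < |V∖U| holds, then R_{SU}^{TV}(λ; w; z) = 0. -/
noncomputable section
open Finset

/-- The theta function `θ(x) = ∏_{j≥0} (1-p^j x)(1-p^{j+1}/x)`. -/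
def theta (p x : ℂ) : ℂ := ∏' j : ℕ, (1 - p ^ j * x) * (1 - p ^ (j + 1) / x)

/-- The elliptic Pochhammer symbol `(x)_k = θ(x)θ(qx)⋯θ(q^{k-1}x)`. -/
def poch (p q x : ℂ) (k : ℕ) : ℂ := ∏ i ∈ Finset.range k, theta p (q ^ i * x)

/-- Genericity: no `q^ℤ`-translate of `u` or of `u⁻¹` is a zero of `θ`. -/
def Gen (p q u : ℂ) : Prop := ∀ k : ℤ, theta p (q ^ k * u) ≠ 0 ∧ theta p (q ^ k * u⁻¹) ≠ 0

/-- The elliptic weight function `Φ(w;z;a)`, defined for tuples of possibly different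
formal lengths (the sum over bijections `Fin m ≃ Fin n` is the sum over `S_n` when
`m = n`, and empty otherwise). -/
def Phi (p q : ℂ) {m n : ℕ} (w : Fin m → ℂ) (z : Fin n → ℂ) (a : ℂ) : ℂ :=
  ∑ σ : Fin m ≃ Fin n,
    (∏ i : Fin m, ∏ j : Fin m,
      if i < j then
        theta p (q * z (σ i) / z (σ j)) * theta p (w i / z (σ j)) /
          (theta p (z (σ i) / z (σ j)) * theta p (q * w i / z (σ j)))
      else 1) *
    ∏ j : Fin m, theta p (a * q ^ (-(j : ℕ) - 1 : ℤ) * w j / z (σ j)) / theta p (q * w j / z (σ j))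

/-- The subtuple of `x` indexed by the elements of `A` in increasing order. -/
def tup {K : ℕ} (x : Fin K → ℂ) (A : Finset (Fin K)) : Fin A.card → ℂ :=
  fun i => x ((A.orderIsoOfFin rfl) i)
/-- `q^λ`, using the fixed branch `logq` of `log q`. -/
def qpow (logq lam : ℂ) : ℂ := Complex.exp (lam * logq)

/-- The generalized elliptic 6j-symbol `R_{SU}^{TV}(λ; w; z)`. -/
def R6j (p q logq : ℂ) {M N : ℕ} (lam : ℂ) (w : Fin M → ℂ) (z : Fin N → ℂ)
    (S T : Finset (Fin M)) (U V : Finset (Fin N)) : ℂ :=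
  if S.card + U.card = T.card + V.card then
    poch p q (qpow logq (lam + 2 + M + N - 2 * (S.card + U.card))) S.card /
      (poch p q (qpow logq (lam + 2 + M - 2 * T.card)) T.card *
        poch p q (qpow logq (lam + 2 + M + N - 2 * (S.card + U.card))) V.card) *
    ∑ X ∈ (Sᶜ ∩ Tᶜ).powerset, ∑ Y ∈ (U ∩ V).powerset,
      if (Y.card : ℤ) - X.card = (S.card : ℤ) + U.card - M then
        theta p q ^ (U.card + V.card - 2 * Y.card) *
        (poch p q (qpow logq (lam + 2 + N - U.card - Y.card)) Y.card /
          poch p q (qpow logq (-lam + 2 * T.card - M)) (V.card - Y.card)) *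
        (∏ i ∈ T, ∏ j ∈ Tᶜ \ X, theta p (q * w i / w j) / theta p (w i / w j)) *
        (∏ i ∈ Sᶜ \ X, ∏ j ∈ X, theta p (q * w i / w j) / theta p (w i / w j)) *
        (∏ i ∈ V \ Y, ∏ j ∈ Vᶜ, theta p (q * z i / z j) / theta p (z i / z j)) *
        (∏ i ∈ Y, ∏ j ∈ U \ Y, theta p (q * z i / z j) / theta p (z i / z j)) *
        (∏ i ∈ Y, ∏ j ∈ X, theta p (q * z i / w j) / theta p (z i / w j)) *
        (∏ i ∈ Xᶜ, ∏ j ∈ Yᶜ, theta p (w i / z j) / theta p (q * w i / z j)) *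
        (∏ i ∈ Sᶜ \ X, ∏ j ∈ U \ Y, theta p (q * w i / z j) / theta p (w i / z j)) *
        (∏ i ∈ Tᶜ \ X, ∏ j ∈ V \ Y, theta p (q * w i / z j) / theta p (w i / z j)) *
        Phi p q (tup w (Sᶜ \ X)) (tup z (U \ Y))
          (qpow logq (lam + 2 + N - U.card - Y.card)) *
        Phi p q (tup w (Tᶜ \ X)) (tup z (V \ Y))
          (qpow logq (-lam + T.card - X.card))
      else 0
  else 0
/-
The sum defining `R_{SU}^{TV}` runs over `X ⊆ Sᶜ ∩ Tᶜ`, `Y ⊆ U ∩ V` with `|Y| - |X| = L - M`,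
so it is nonzero only if `-|Sᶜ ∩ Tᶜ| ≤ L - M ≤ |U ∩ V|`. Since `|Sᶜ ∩ Tᶜ| = M - |S ∪ T|` and
`|S ∪ T| = |T| + |S \ T| = |S| + |T \ S|`, the lower bound fails exactly when
`|V| < |S \ T|` or `|U| < |T \ S|`; dually, since `|U ∩ V| = |U| - |U \ V| = |V| - |V \ U|`, the
upper bound fails exactly when `|Sᶜ| < |U \ V|` or `|Tᶜ| < |V \ U|`. The sum is then empty.
-/

theorem sub_card_lt_neg_card_compl_inter_compl {α β : Type*} [Fintype α] [DecidableEq α]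
    {S T : Finset α} {U V : Finset β} (hbal : S.card + U.card = T.card + V.card)
    (h : V.card < (S \ T).card ∨ U.card < (T \ S).card) :
    (S.card : ℤ) + U.card - Fintype.card α < -((Sᶜ ∩ Tᶜ).card : ℤ) := by
  have hST := card_sdiff_add_card S T
  have hTS := card_sdiff_add_card T S
  have hcompl : (Sᶜ ∩ Tᶜ).card + (S ∪ T).card = Fintype.card α := by
    rw [← compl_union, card_compl, Nat.sub_add_cancel (card_le_univ _)]
  rw [union_comm T S] at hTS
  omega

theorem card_inter_lt_sub_card {α β : Type*} [Fintype α] [DecidableEq α] [DecidableEq β]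
    {S T : Finset α} {U V : Finset β} (hbal : S.card + U.card = T.card + V.card)
    (h : Sᶜ.card < (U \ V).card ∨ Tᶜ.card < (V \ U).card) :
    ((U ∩ V).card : ℤ) < S.card + U.card - Fintype.card α := by
  have hUV := card_sdiff_add_card_inter U V
  have hVU := card_sdiff_add_card_inter V U
  rw [inter_comm V U] at hVU
  have hS := card_compl_add_card S
  have hT := card_compl_add_card T
  omega

theorem R6j_eq_zero_of_forall_card_sub_card_ne (p q logq : ℂ) {M N : ℕ} (lam : ℂ)
    (w : Fin M → ℂ) (z : Fin N → ℂ) (S T : Finset (Fin M)) (U V : Finset (Fin N))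
    (h : ∀ X ⊆ Sᶜ ∩ Tᶜ, ∀ Y ⊆ U ∩ V, (Y.card : ℤ) - X.card ≠ (S.card : ℤ) + U.card - M) :
    R6j p q logq lam w z S T U V = 0 := by
  unfold R6j
  split_ifs
  · refine mul_eq_zero_of_right _ (sum_eq_zero fun X hX => sum_eq_zero fun Y hY => ?_)
    exact if_neg (h X (mem_powerset.mp hX) Y (mem_powerset.mp hY))
  · rfl

theorem vanishing_conditions_for_generalized_elliptic_6j_symbols_general
    (p q logq : ℂ)
    (M N : ℕ) (lam : ℂ) (w : Fin M → ℂ) (z : Fin N → ℂ)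
    (S T : Finset (Fin M)) (U V : Finset (Fin N))
    (hbal : S.card + U.card = T.card + V.card)
    (hvan : V.card < (S \ T).card ∨ U.card < (T \ S).card ∨
      Sᶜ.card < (U \ V).card ∨ Tᶜ.card < (V \ U).card) :
    R6j p q logq lam w z S T U V = 0 := by
  refine R6j_eq_zero_of_forall_card_sub_card_ne p q logq lam w z S T U V fun X hX Y hY => ?_
  have hXc : X.card ≤ (Sᶜ ∩ Tᶜ).card := card_le_card hX
  have hYc : Y.card ≤ (U ∩ V).card := card_le_card hY
  rcases or_assoc.mpr hvan with hlow | hhigh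
  · have := sub_card_lt_neg_card_compl_inter_compl hbal hlow
    rw [Fintype.card_fin] at this
    omega
  · have := card_inter_lt_sub_card hbal hhigh
    rw [Fintype.card_fin] at this
    omega

/-- Vanishing conditions for generalized elliptic 6j-symbols. -/
theorem vanishing_conditions_for_generalized_elliptic_6j_symbols
    (p q logq : ℂ) (hp0 : p ≠ 0) (hp1 : ‖p‖ < 1) (hq : q ≠ 0)
    (hlogq : Complex.exp logq = q)
    (M N : ℕ) (lam : ℂ) (w : Fin M → ℂ) (z : Fin N → ℂ)
    (hw0 : ∀ i, w i ≠ 0) (hz0 : ∀ i, z i ≠ 0)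
    (S T : Finset (Fin M)) (U V : Finset (Fin N))
    (hbal : S.card + U.card = T.card + V.card)
    (hlam : ∀ k : ℤ, theta p (qpow logq (lam + k)) ≠ 0 ∧ theta p (qpow logq (-lam + k)) ≠ 0)
    (hww : ∀ i j, i ≠ j → Gen p q (w i / w j))
    (hzz : ∀ i j, i ≠ j → Gen p q (z i / z j))
    (hwz : ∀ i j, Gen p q (w i / z j))
    (hvan : V.card < (S \ T).card ∨ U.card < (T \ S).card ∨
      Sᶜ.card < (U \ V).card ∨ Tᶜ.card < (V \ U).card) :
    R6j p q logq lam w z S T U V = 0 :=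
  vanishing_conditions_for_generalized_elliptic_6j_symbols_general p q logq M N lam w z S T U V hbal
    hvan
end
end

section
/- Evaluation of generalized elliptic 6j-symbols with V = ∅: For nonnegative integers M, N, generic λ ∈ ℂ, w ∈ (ℂ^×)^M, z ∈ (ℂ^×)^N, and subsets S,T ⊆ [M], U ⊆ [N] with |S|+|U| = |T|: if S ⊆ T, then R_{SU}^{T∅}(λ; w; z) = θ(q)^{|U|}·∏_{i∈T∖S, j∈U}[θ(q w_i/z_j)/θ(w_i/z_j)]·∏_{i∈T∖S, j∈T^c}[θ(q w_i/w_j)/θ(w_i/w_j)]·∏_{i∈T, j∈[N]}[θ(w_i/z_j)/θ(q w_i/z_j)]·[(q^{λ+2+M+N−2|T|})_{|S|}/(q^{λ+2+M−2|T|})_{|T|}]·Φ(w_{T∖S}; z_U; q^{λ+2+N−|U|}); if S ⊄ T, then R_{SU}^{T∅}(λ; w; z) = 0. -/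
noncomputable section
open Finset

/-!
With `V = ∅` the sum over `Y ⊆ U ∩ V` collapses to `Y = ∅`, and the balancing condition
`|Y| - |X| = L - M` with `L = |T|` forces `|X| = |Tᶜ|`. Since `X ⊆ Sᶜ ∩ Tᶜ ⊆ Tᶜ`, this means
`X = Tᶜ`, which is admissible exactly when `Tᶜ ⊆ Sᶜ`, i.e. `S ⊆ T`. The surviving term has
`Sᶜ \ X = T \ S` and `Tᶜ \ X = ∅`, so its second weight function is the empty one, equal to `1`.
-/

theorem Phi_eq_one_of_eq_zero (p q : ℂ) {m n : ℕ} (w : Fin m → ℂ) (z : Fin n → ℂ) (a : ℂ)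
    (hm : m = 0) (hn : n = 0) : Phi p q w z a = 1 := by
  subst hm hn
  simp [Phi]

theorem poch_zero (p q x : ℂ) : poch p q x 0 = 1 := prod_range_zero _

section Powerset

variable {α : Type*} [Fintype α] [DecidableEq α]

theorem subset_and_eq_compl_of_subset_inter_compl {S T X : Finset α}
    (hX : X ⊆ Sᶜ ∩ Tᶜ) (hcard : #X = #Tᶜ) : S ⊆ T ∧ X = Tᶜ := by
  have hXT : X = Tᶜ := eq_of_subset_of_card_le (hX.trans inter_subset_right) hcard.ge
  refine ⟨compl_subset_compl.mp ?_, hXT⟩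
  exact hXT ▸ hX.trans inter_subset_left

theorem sum_powerset_inter_compl_ite_card_eq {β : Type*} [AddCommMonoid β]
    (S T : Finset α) (f : Finset α → β) :
    ∑ X ∈ (Sᶜ ∩ Tᶜ).powerset, (if #X = #Tᶜ then f X else 0) =
      if S ⊆ T then f Tᶜ else 0 := by
  split_ifs with hST
  · have hmem : Tᶜ ∈ (Sᶜ ∩ Tᶜ).powerset :=
      mem_powerset.mpr (subset_inter (compl_subset_compl.mpr hST) subset_rfl)
    rw [sum_eq_single_of_mem Tᶜ hmem, if_pos rfl]
    exact fun X hX hne =>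
      if_neg fun hc => hne (subset_and_eq_compl_of_subset_inter_compl (mem_powerset.mp hX) hc).2
  · refine sum_eq_zero fun X hX => if_neg fun hc => hST ?_
    exact (subset_and_eq_compl_of_subset_inter_compl (mem_powerset.mp hX) hc).1

end Powerset

theorem evaluation_of_generalized_elliptic_6j_symbols_V_empty_general
    (p q logq : ℂ)
    (M N : ℕ) (lam : ℂ) (w : Fin M → ℂ) (z : Fin N → ℂ)
    (S T : Finset (Fin M)) (U : Finset (Fin N))
    (hbal : S.card + U.card = T.card) :
    R6j p q logq lam w z S T U (∅ : Finset (Fin N)) =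
      if S ⊆ T then
        theta p q ^ U.card *
        (∏ i ∈ T \ S, ∏ j ∈ U, theta p (q * w i / z j) / theta p (w i / z j)) *
        (∏ i ∈ T \ S, ∏ j ∈ Tᶜ, theta p (q * w i / w j) / theta p (w i / w j)) *
        (∏ i ∈ T, ∏ j : Fin N, theta p (w i / z j) / theta p (q * w i / z j)) *
        (poch p q (qpow logq (lam + 2 + M + N - 2 * T.card)) S.card /
          poch p q (qpow logq (lam + 2 + M - 2 * T.card)) T.card) *
        Phi p q (tup w (T \ S)) (tup z U) (qpow logq (lam + 2 + N - U.card))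
      else 0 := by
  have hbalance : ∀ X : Finset (Fin M), ((0 : ℤ) - #X = #S + #U - M ↔ #X = #Tᶜ) := by
    intro X
    have := T.card_le_univ
    simp only [card_compl, Fintype.card_fin] at this ⊢
    omega
  have hcast : (#S : ℂ) + #U = #T := by exact_mod_cast hbal
  rw [R6j, if_pos (by simpa using hbal)]
  simp only [inter_empty, powerset_empty, sum_singleton, card_empty, Nat.cast_zero, hbalance]
  rw [sum_powerset_inter_compl_ite_card_eq]
  split_ifs
  · rw [compl_sdiff_compl (x := S), Finset.sdiff_self, sdiff_empty, sdiff_empty,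
      Phi_eq_one_of_eq_zero p q (tup w ∅) (tup z ∅) _ card_empty card_empty]
    simp only [compl_compl, compl_empty, prod_empty, prod_const_one, poch_zero, hcast,
      mul_zero, add_zero, Nat.sub_zero, sub_zero]
    ring
  · rw [mul_zero]

/-- Evaluation of generalized elliptic 6j-symbols with `V = ∅`: the symbol vanishes
unless `S ⊆ T`, in which case it is an elementary factor times a single elliptic
weight function. -/
theorem evaluation_of_generalized_elliptic_6j_symbols_V_empty
    (p q logq : ℂ) (hp0 : p ≠ 0) (hp1 : ‖p‖ < 1) (hq : q ≠ 0)
    (hlogq : Complex.exp logq = q)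
    (M N : ℕ) (lam : ℂ) (w : Fin M → ℂ) (z : Fin N → ℂ)
    (hw0 : ∀ i, w i ≠ 0) (hz0 : ∀ i, z i ≠ 0)
    (S T : Finset (Fin M)) (U : Finset (Fin N))
    (hbal : S.card + U.card = T.card)
    (hlam : ∀ k : ℤ, theta p (qpow logq (lam + k)) ≠ 0 ∧ theta p (qpow logq (-lam + k)) ≠ 0)
    (hww : ∀ i j, i ≠ j → Gen p q (w i / w j))
    (hzz : ∀ i j, i ≠ j → Gen p q (z i / z j))
    (hwz : ∀ i j, Gen p q (w i / z j)) :
    R6j p q logq lam w z S T U (∅ : Finset (Fin N)) =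
      if S ⊆ T then
        theta p q ^ U.card *
        (∏ i ∈ T \ S, ∏ j ∈ U, theta p (q * w i / z j) / theta p (w i / z j)) *
        (∏ i ∈ T \ S, ∏ j ∈ Tᶜ, theta p (q * w i / w j) / theta p (w i / w j)) *
        (∏ i ∈ T, ∏ j : Fin N, theta p (w i / z j) / theta p (q * w i / z j)) *
        (poch p q (qpow logq (lam + 2 + M + N - 2 * T.card)) S.card /
          poch p q (qpow logq (lam + 2 + M - 2 * T.card)) T.card) *
        Phi p q (tup w (T \ S)) (tup z U) (qpow logq (lam + 2 + N - U.card))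
      else 0 :=
  evaluation_of_generalized_elliptic_6j_symbols_V_empty_general p q logq M N lam w z S T U hbal
end
end

section
/- Factorization of the elliptic weight function at a geometric progression in the second argument: For n ≥ 1, generic w ∈ (ℂ^×)^n, ζ ∈ ℂ^× and a ∈ ℂ^×, if z_j = q^{j−1}ζ for j = 1,…,n, then Φ(w; z; a) = [(q)_n/θ(q)^n]·∏_{j=1}^n [θ(q^{−n} a w_j/ζ)/θ(q w_j/ζ)], where (q)_n = θ(q)θ(q²)⋯θ(q^n). -/
noncomputable section
open Finset

/-!
If `σ ≠ rev`, some `i < j` has `σ j = σ i + 1`; for `z_k = q^k ζ` the factor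
`θ(q z_{σ i}/z_{σ j}) = θ(1)` then vanishes, so only the reversal survives in `Φ`. In the
reversal term, the cross factors with a fixed first index `i` telescope in `j`: to
`θ(q^{n-i})/θ(q)`, whose product over `i` is `(q)_n/θ(q)^n`, and to a ratio whose numerator
cancels the denominator of the `i`-th diagonal factor.
-/

theorem theta_one (p : ℂ) : theta p 1 = 0 :=
  tprod_of_exists_eq_zero ⟨0, by simp⟩

theorem Finset.prod_Ico_div₀ {K : Type*} [CommGroupWithZero K] (f : ℕ → K) {m n : ℕ}
    (hmn : m ≤ n) (hf : ∀ k ∈ Icc m n, f k ≠ 0) :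
    ∏ k ∈ Ico m n, f (k + 1) / f k = f n / f m := by
  induction n, hmn using Nat.le_induction with
  | base => simp [div_self (hf m (by simp))]
  | succ n hmn ih =>
    rw [prod_Ico_succ_top hmn, ih fun k hk => hf k (by simp only [mem_Icc] at hk ⊢; omega),
      mul_comm, div_mul_div_cancel₀ (hf n (by simp [hmn]))]

theorem Finset.prod_Ico_div_succ₀ {K : Type*} [CommGroupWithZero K] (f : ℕ → K) {m n : ℕ}
    (hmn : m ≤ n) (hf : ∀ k ∈ Icc m n, f k ≠ 0) :
    ∏ k ∈ Ico m n, f k / f (k + 1) = f m / f n := by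
  rw [← inv_div, ← prod_Ico_div₀ f hmn hf, ← prod_inv_distrib]
  simp only [inv_div]

theorem Fin.prod_ite_lt_eq_prod_Ico {M : Type*} [CommMonoid M] {n : ℕ} (i : Fin n) (f : ℕ → M) :
    ∏ j : Fin n, (if i < j then f j else 1) = ∏ k ∈ Ico (i + 1 : ℕ) n, f k := by
  simp only [Fin.lt_def]
  rw [Fin.prod_univ_eq_prod_range (fun k => if (i : ℕ) < k then f k else 1), ← prod_filter]
  congr 1
  ext k
  simp only [mem_filter, mem_range, mem_Ico]
  omega

theorem Fin.exists_lt_val_eq_succ_of_ne_revPerm {n : ℕ} {σ : Equiv.Perm (Fin n)}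
    (hσ : σ ≠ Fin.revPerm) : ∃ i j, i < j ∧ (σ j : ℕ) = σ i + 1 := by
  by_contra! h
  have hanti : StrictAnti σ.symm := by
    refine (strictAnti_iff_forall_covBy _).2 fun a b hab => ?_
    rcases lt_trichotomy (σ.symm a) (σ.symm b) with hlt | heq | hgt
    · refine absurd ?_ (h _ _ hlt)
      simpa using (Nat.covBy_iff_add_one_eq.1 (Fin.covBy_iff.1 hab)).symm
    · exact absurd (σ.symm.injective heq) hab.ne
    · exact hgt
  refine hσ (Equiv.ext fun k => ?_)
  have hk : σ.symm (Fin.rev k) = k := (hanti.comp Fin.rev_strictAnti).apply_eq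
  exact ((Equiv.symm_apply_eq σ).mp hk).symm

def phiTerm (p q : ℂ) {m n : ℕ} (w : Fin m → ℂ) (z : Fin n → ℂ) (a : ℂ) (σ : Fin m ≃ Fin n) :
    ℂ :=
  (∏ i : Fin m, ∏ j : Fin m,
    if i < j then
      theta p (q * z (σ i) / z (σ j)) * theta p (w i / z (σ j)) /
        (theta p (z (σ i) / z (σ j)) * theta p (q * w i / z (σ j)))
    else 1) *
  ∏ j : Fin m, theta p (a * q ^ (-(j : ℕ) - 1 : ℤ) * w j / z (σ j)) / theta p (q * w j / z (σ j))

theorem Phi_eq_sum_phiTerm (p q : ℂ) {m n : ℕ} (w : Fin m → ℂ) (z : Fin n → ℂ) (a : ℂ) :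
    Phi p q w z a = ∑ σ, phiTerm p q w z a σ :=
  rfl

theorem phiTerm_eq_zero (p q : ℂ) {m n : ℕ} (w : Fin m → ℂ) (z : Fin n → ℂ) (a : ℂ)
    {σ : Fin m ≃ Fin n} {i j : Fin m} (hij : i < j) (hz : z (σ j) = q * z (σ i))
    (hz0 : z (σ j) ≠ 0) : phiTerm p q w z a σ = 0 := by
  refine mul_eq_zero_of_left (prod_eq_zero (mem_univ i) (prod_eq_zero (mem_univ j) ?_)) _
  rw [if_pos hij, ← hz, div_self hz0, theta_one, zero_mul, zero_div]

section PowArith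

variable {K : Type*} [Field K] {q ζ : K}

theorem pow_mul_div_pow_mul (hq : q ≠ 0) (hζ : ζ ≠ 0) {k l : ℕ} (hlk : l ≤ k) :
    q ^ k * ζ / (q ^ l * ζ) = q ^ (k - l) := by
  rw [mul_div_mul_right _ _ hζ, pow_sub₀ _ hq hlk, div_eq_mul_inv]

theorem mul_div_pow_succ_mul (hq : q ≠ 0) (x : K) (k : ℕ) :
    q * x / (q ^ (k + 1) * ζ) = x / (q ^ k * ζ) := by
  rw [pow_succ', mul_assoc, mul_div_mul_left _ _ hq]

theorem mul_div_pow_mul_eq_zpow (hq : q ≠ 0) (hζ : ζ ≠ 0) (x : K) (k : ℕ) :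
    q * x / (q ^ k * ζ) = q ^ (1 - (k : ℤ)) * (x / ζ) := by
  rw [zpow_sub₀ hq, zpow_one, zpow_natCast]
  field_simp

theorem zpow_mul_div_pow_rev_mul (hq : q ≠ 0) (a x : K) {j n : ℕ} (hj : j < n) :
    a * q ^ (-(j : ℤ) - 1) * x / (q ^ (n - (j + 1)) * ζ) = q ^ (-(n : ℤ)) * a * x / ζ := by
  have hexp : q ^ (-(j : ℤ) - 1) = q ^ (-(n : ℤ)) * q ^ (n - (j + 1)) := by
    rw [← zpow_natCast, ← zpow_add₀ hq]
    congr 1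
    omega
  rw [hexp]
  field_simp

end PowArith

section Geometric

variable {p q ζ : ℂ} {n : ℕ}

theorem Phi_geometric_eq_phiTerm_revPerm (hq : q ≠ 0) (hζ : ζ ≠ 0) (w : Fin n → ℂ) (a : ℂ) :
    Phi p q w (fun k : Fin n => q ^ (k : ℕ) * ζ) a =
      phiTerm p q w (fun k : Fin n => q ^ (k : ℕ) * ζ) a Fin.revPerm := by
  rw [Phi_eq_sum_phiTerm, sum_eq_single_of_mem _ (mem_univ _)]
  intro σ _ hσ
  obtain ⟨i, j, hij, hσij⟩ := Fin.exists_lt_val_eq_succ_of_ne_revPerm hσ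
  exact phiTerm_eq_zero p q w _ a hij (by rw [hσij, pow_succ']; ring)
    (mul_ne_zero (pow_ne_zero _ hq) hζ)

theorem prod_crossFactor_rev_geometric (hq : q ≠ 0) (hζ : ζ ≠ 0)
    (hq0 : ∀ k : ℤ, k ≠ 0 → theta p (q ^ k) ≠ 0) {x : ℂ}
    (hx : ∀ k : ℤ, theta p (q ^ k * (x / ζ)) ≠ 0) (i : Fin n) :
    (∏ j : Fin n,
      if i < j then
        theta p (q * (q ^ (Fin.rev i : ℕ) * ζ) / (q ^ (Fin.rev j : ℕ) * ζ)) *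
            theta p (x / (q ^ (Fin.rev j : ℕ) * ζ)) /
          (theta p (q ^ (Fin.rev i : ℕ) * ζ / (q ^ (Fin.rev j : ℕ) * ζ)) *
            theta p (q * x / (q ^ (Fin.rev j : ℕ) * ζ)))
      else 1) =
      theta p (q ^ (n - i : ℕ)) / theta p q *
        (theta p (q * x / (q ^ (Fin.rev i : ℕ) * ζ)) / theta p (q * x / ζ)) := by
  set f : ℕ → ℂ := fun k => theta p (q ^ (k - i))
  set g : ℕ → ℂ := fun k => theta p (q * x / (q ^ (n - k) * ζ))
  have hf : ∀ k ∈ Icc (i + 1 : ℕ) n, f k ≠ 0 := fun k hk => by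
    simp only [mem_Icc] at hk
    simpa [f] using hq0 ((k - i : ℕ) : ℤ) (by omega)
  have hg : ∀ k ∈ Icc (i + 1 : ℕ) n, g k ≠ 0 := fun k _ => by
    simp only [g]
    rw [mul_div_pow_mul_eq_zpow hq hζ]
    exact hx _
  calc _ = ∏ j : Fin n, if i < j then f (j + 1) / f j * (g j / g (j + 1)) else 1 := by
        refine prod_congr rfl fun j _ => ?_
        split_ifs with hij
        · rw [Fin.lt_def] at hij
          simp only [Fin.val_rev, f, g]
          rw [← mul_assoc, ← pow_succ', pow_mul_div_pow_mul hq hζ (by omega),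
            pow_mul_div_pow_mul hq hζ (by omega), show n - j = n - (j + 1) + 1 by omega,
            mul_div_pow_succ_mul hq, show n - (i + 1) + 1 - (n - (j + 1)) = j + 1 - i by omega,
            show n - (i + 1) - (n - (j + 1)) = j - i by omega, mul_div_mul_comm]
        · rfl
    _ = ∏ k ∈ Ico (i + 1 : ℕ) n, f (k + 1) / f k * (g k / g (k + 1)) :=
        Fin.prod_ite_lt_eq_prod_Ico i fun k => f (k + 1) / f k * (g k / g (k + 1))
    _ = f n / f (i + 1) * (g (i + 1) / g n) := by
        rw [prod_mul_distrib, prod_Ico_div₀ f i.isLt hf, prod_Ico_div_succ₀ g i.isLt hg]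
    _ = _ := by simp [f, g, Fin.val_rev]

theorem phiTerm_revPerm_geometric (hq : q ≠ 0) (hζ : ζ ≠ 0)
    (hq0 : ∀ k : ℤ, k ≠ 0 → theta p (q ^ k) ≠ 0) {w : Fin n → ℂ}
    (hw : ∀ i (k : ℤ), theta p (q ^ k * (w i / ζ)) ≠ 0) (a : ℂ) :
    phiTerm p q w (fun k : Fin n => q ^ (k : ℕ) * ζ) a Fin.revPerm =
      ∏ i : Fin n, theta p (q ^ (n - i : ℕ)) / theta p q *
        (theta p (q ^ (-(n : ℤ)) * a * w i / ζ) / theta p (q * w i / ζ)) := by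
  rw [phiTerm, ← prod_mul_distrib]
  refine prod_congr rfl fun i _ => ?_
  simp only [Fin.revPerm_apply]
  rw [prod_crossFactor_rev_geometric hq hζ hq0 (hw i), Fin.val_rev, zpow_mul_div_pow_rev_mul hq _ _ i.isLt]
  have hB : theta p (q * w i / (q ^ (n - (i + 1)) * ζ)) ≠ 0 := by
    rw [mul_div_pow_mul_eq_zpow hq hζ]
    exact hw i _
  rw [mul_assoc, div_mul_div_cancel₀' hB]

end Geometric

theorem prod_theta_pow_sub_eq_poch (p q : ℂ) (n : ℕ) :
    ∏ i : Fin n, theta p (q ^ (n - i : ℕ)) = poch p q q n := by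
  rw [Fin.prod_univ_eq_prod_range (fun i => theta p (q ^ (n - i))), poch, ← prod_range_reflect]
  refine prod_congr rfl fun k hk => ?_
  rw [← pow_succ, show n - (n - 1 - k) = k + 1 by have := mem_range.1 hk; omega]

theorem factorization_of_elliptic_weight_function_second_argument_general
    (p q : ℂ) (hq : q ≠ 0)
    (n : ℕ) (w : Fin n → ℂ) (ζ a : ℂ) (hζ : ζ ≠ 0)
    (hq0 : ∀ k : ℤ, k ≠ 0 → theta p (q ^ k) ≠ 0)
    (hwζ : ∀ j, Gen p q (w j / ζ)) :
    Phi p q w (fun j : Fin n => q ^ (j : ℕ) * ζ) a =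
      poch p q q n / theta p q ^ n *
        ∏ j : Fin n, theta p (q ^ (-(n : ℤ)) * a * w j / ζ) / theta p (q * w j / ζ) := by
  rw [Phi_geometric_eq_phiTerm_revPerm hq hζ,
    phiTerm_revPerm_geometric hq hζ hq0 (fun i k => (hwζ i k).1), prod_mul_distrib,
    prod_div_distrib, prod_theta_pow_sub_eq_poch, prod_const, card_univ, Fintype.card_fin]

/-- Factorization of the elliptic weight function when the second argument is
the geometric progression `z_j = q^(j-1) ζ`. -/
theorem factorization_of_elliptic_weight_function_second_argument
    (p q : ℂ) (hp0 : p ≠ 0) (hp1 : ‖p‖ < 1) (hq : q ≠ 0)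
    (n : ℕ) (hn : 1 ≤ n) (w : Fin n → ℂ) (ζ a : ℂ) (hζ : ζ ≠ 0) (ha : a ≠ 0)
    (hw0 : ∀ i, w i ≠ 0)
    (hq0 : ∀ k : ℤ, k ≠ 0 → theta p (q ^ k) ≠ 0)
    (hwζ : ∀ j, Gen p q (w j / ζ)) :
    Phi p q w (fun j : Fin n => q ^ (j : ℕ) * ζ) a =
      poch p q q n / theta p q ^ n *
        ∏ j : Fin n, theta p (q ^ (-(n : ℤ)) * a * w j / ζ) / theta p (q * w j / ζ) :=
  factorization_of_elliptic_weight_function_second_argument_general p q hq n w ζ a hζ hq0 hwζ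
end
end
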